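/- arXiv:2509.22362 — 3 statements merged into one kernel-verified Lean document; each statement's English description precedes it below -/
import Mathlib

section
/- Let X ⊂ ℝⁿ be a finite set, let 0 < ε < 1, and suppose that for every x ∈ X one has min_{Y⊆X∖{x}, |Y|=k} max_{y∈Y} ‖x−y‖² ≤ ((1−ε)/(1+ε)) · min_{Y⊆X∖{x}, |Y|=k+1} max_{y∈Y} ‖x−y‖². Let A ∈ ℝ^{m×n} be a random matrix with i.i.d. entries A_{ij} ~ N(0, 1/m). Then the map ψ: x ↦ Ax is a graph isomorphism between the k-nearest neighbor graphs G_k(X) and G_k(AX), where AX = {Ax : x ∈ X}, with probability at least 1 − |X|(|X|−1)·exp((m/4)(ε³ − ε²)). -/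
open MeasureTheory ProbabilityTheory

/-- The Euclidean (`L²`) norm of a vector in `ℝ^k`. -/
noncomputable def euclNorm {k : ℕ} (x : Fin k → ℝ) : ℝ := Real.sqrt (∑ i, x i ^ 2)

/-- The Euclidean distance between two vectors in `ℝ^k`. -/
noncomputable def distE {k : ℕ} (a b : Fin k → ℝ) : ℝ := euclNorm (a - b)

/-- Matrix-vector multiplication, viewing a matrix as a function of its rows. -/
def matVec {m n : ℕ} (A : Fin m → Fin n → ℝ) (x : Fin n → ℝ) : Fin m → ℝ :=
  fun i => ∑ j, A i j * x j

/-- The law of a random `m × n` matrix with i.i.d. centered Gaussian entries of variance `v`. -/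
noncomputable def gaussMat (m n : ℕ) (v : NNReal) : Measure (Fin m → Fin n → ℝ) :=
  Measure.pi fun _ : Fin m => Measure.pi fun _ : Fin n => gaussianReal 0 v

/-- `min_{Y ⊆ X∖{x}, |Y| = k} max_{y ∈ Y} f x y`, formalized with `sInf`/`sSup` over `ℝ`. -/
noncomputable def kMinMax {V : Type*} [DecidableEq V] (f : V → V → ℝ)
    (X : Finset V) (k : ℕ) (x : V) : ℝ :=
  sInf {r : ℝ | ∃ Y : Finset V, Y ⊆ X.erase x ∧ Y.card = k ∧
    r = sSup {s : ℝ | ∃ y ∈ Y, s = f x y}}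

/-- `y` is among the `k` points of `X ∖ {x}` closest to `x` (w.r.t. the distance `f`):
fewer than `k` points of `X ∖ {x}` are strictly closer to `x` than `y` is. -/
def NearK {V : Type*} [DecidableEq V] (f : V → V → ℝ) (X : Finset V) (k : ℕ) (x y : V) : Prop :=
  y ∈ X.erase x ∧ ((X.erase x).filter (fun z => f x z < f x y)).card < k

/-- Adjacency in the `k`-nearest neighbor graph `G_k(X)` (w.r.t. the distance `f`). -/
def KNNAdj {V : Type*} [DecidableEq V] (f : V → V → ℝ) (X : Finset V) (k : ℕ) (x y : V) : Prop :=
  x ≠ y ∧ x ∈ X ∧ y ∈ X ∧ (NearK f X k x y ∨ NearK f X k y x)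

/-- `ψ` is a graph isomorphism between `G_k(X)` and `G_k(ψ(X))`: it is a bijection of `X`
onto its image preserving and reflecting `k`-NN adjacency. -/
def IsKNNIso {V W : Type*} [DecidableEq V] [DecidableEq W]
    (fV : V → V → ℝ) (fW : W → W → ℝ) (X : Finset V) (k : ℕ) (ψ : V → W) : Prop :=
  Set.InjOn ψ X ∧
    ∀ x ∈ X, ∀ y ∈ X, (KNNAdj fV X k x y ↔ KNNAdj fW (X.image ψ) k (ψ x) (ψ y))

open Real Finset
open scoped ENNReal NNReal

/-!
For a fixed pair `x ≠ y` the coordinates of `A (x - y)` are independent `N(0, ‖x - y‖² / m)`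
variables, so `E exp (t ‖A (x - y)‖²) = (1 - 2 t ‖x - y‖² / m) ^ (-m / 2)`, and the Chernoff
bound makes each one-sided tail `‖A (x - y)‖² ∉ (1 ± ε) ‖x - y‖²` at most `exp (m/4 (ε³ - ε²))`.
Charging the upper tail to one ordering of the pair and the lower tail to the other, a union bound
over the `|X| (|X| - 1)` ordered pairs bounds the failure probability.

Off that event every squared distance is distorted by a factor in `(1 - ε, 1 + ε)`. The gap
hypothesis separates the `k` nearest neighbours of `x` (squared distance at most
`d_k = kMinMax (distE · · ^ 2) X k x`) from the other points (squared distance at least `d_{k+1}`)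
by the factor `(1 + ε) / (1 - ε)`, so such a distortion cannot move a point across the gap and the
`k`-nearest neighbour relation is preserved.
-/

theorem distE_nonneg {k : ℕ} (a b : Fin k → ℝ) : 0 ≤ distE a b := sqrt_nonneg _

theorem distE_self {k : ℕ} (a : Fin k → ℝ) : distE a a = 0 := by simp [distE, euclNorm]

theorem distE_comm {k : ℕ} (a b : Fin k → ℝ) : distE a b = distE b a := by
  simp only [distE, euclNorm, Pi.sub_apply, ← neg_sub (b _), neg_sq]

theorem euclNorm_sq {k : ℕ} (x : Fin k → ℝ) : euclNorm x ^ 2 = ∑ i, x i ^ 2 :=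
  sq_sqrt (by positivity)

theorem euclNorm_pos {k : ℕ} {x : Fin k → ℝ} (hx : x ≠ 0) : 0 < euclNorm x := by
  obtain ⟨i, hi⟩ := Function.ne_iff.1 hx
  exact sqrt_pos.2 (sum_pos' (fun _ _ => sq_nonneg _) ⟨i, mem_univ _, sq_pos_of_ne_zero hi⟩)

theorem distE_pos {k : ℕ} {a b : Fin k → ℝ} (h : a ≠ b) : 0 < distE a b :=
  euclNorm_pos (sub_ne_zero.2 h)

theorem distE_matVec {m n : ℕ} (A : Fin m → Fin n → ℝ) (x y : Fin n → ℝ) :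
    distE (matVec A x) (matVec A y) = euclNorm (matVec A (x - y)) := by
  rw [distE]
  congr 1
  funext i
  simp [matVec, mul_sub, sum_sub_distrib]

theorem setOf_exists_mem_eq_image {α : Type*} (Y : Finset α) (g : α → ℝ) :
    {s | ∃ y ∈ Y, s = g y} = ↑(Y.image g) := by
  ext s
  simp [eq_comm]

section NearestNeighbors

variable {V W : Type*} [DecidableEq V] [DecidableEq W]

theorem card_filter_lt_lt_iff_of_distortion {E : Finset V} {F G : V → ℝ} {k : ℕ} {ε d d' : ℝ}
    (hε0 : 0 ≤ ε) (hε1 : ε < 1)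
    (hFG : ∀ z ∈ E, (1 - ε) * F z < G z ∧ G z < (1 + ε) * F z)
    (hd : k ≤ #{z ∈ E | F z ≤ d}) (hd' : #{z ∈ E | F z < d'} ≤ k)
    (hgap : (1 + ε) * d ≤ (1 - ε) * d') {y : V} (hy : y ∈ E) :
    #{z ∈ E | G z < G y} < k ↔ F y ≤ d := by
  have hlt_d' : ∀ z ∈ E, G z < (1 + ε) * d → F z < d' := fun z hz hzd =>
    lt_of_mul_lt_mul_left ((hFG z hz).1.trans (hzd.trans_le hgap)) (by linarith)
  constructor
  · intro hcard
    by_contra! hdy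
    have hd'y : d' ≤ F y := by
      by_contra! hyd'
      have hy_notMem : y ∉ {z ∈ E | F z ≤ d} := fun h => not_le.2 hdy (mem_filter.1 h).2
      have hsub : insert y {z ∈ E | F z ≤ d} ⊆ {z ∈ E | F z < d'} := by
        refine insert_subset (mem_filter.2 ⟨hy, hyd'⟩) fun z hz => ?_
        rw [mem_filter] at hz ⊢
        exact ⟨hz.1, hz.2.trans_lt (hdy.trans hyd')⟩
      have := card_le_card hsub
      rw [card_insert_of_notMem hy_notMem] at this
      omega
    have hsub : {z ∈ E | F z ≤ d} ⊆ {z ∈ E | G z < G y} := by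
      intro z hz
      rw [mem_filter] at hz ⊢
      refine ⟨hz.1, ?_⟩
      calc G z < (1 + ε) * F z := (hFG z hz.1).2
        _ ≤ (1 + ε) * d := by gcongr; exact hz.2
        _ ≤ (1 - ε) * d' := hgap
        _ ≤ (1 - ε) * F y := by gcongr
        _ < G y := (hFG y hy).1
    have := card_le_card hsub
    omega
  · intro hyd
    have hGy : G y < (1 + ε) * d := (hFG y hy).2.trans_le (by gcongr)
    have hymem : y ∈ {z ∈ E | F z < d'} := mem_filter.2 ⟨hy, hlt_d' y hy hGy⟩
    have hsub : {z ∈ E | G z < G y} ⊆ {z ∈ E | F z < d'}.erase y := by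
      intro z hz
      rw [mem_filter] at hz
      exact mem_erase.2
        ⟨fun h => (h ▸ hz.2).false, mem_filter.2 ⟨hz.1, hlt_d' z hz.1 (hz.2.trans hGy)⟩⟩
    have := card_le_card hsub
    rw [card_erase_of_mem hymem] at this
    have := card_pos.2 ⟨y, hymem⟩
    omega

theorem finite_kMinMax_values (f : V → V → ℝ) (X : Finset V) (k : ℕ) (x : V) :
    {r : ℝ | ∃ Y : Finset V, Y ⊆ X.erase x ∧ #Y = k ∧
      r = sSup {s | ∃ y ∈ Y, s = f x y}}.Finite := by
  refine ((X.erase x).powerset.finite_toSet.image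
    fun Y => sSup {s | ∃ y ∈ Y, s = f x y}).subset ?_
  rintro r ⟨Y, hY, -, rfl⟩
  exact ⟨Y, mem_powerset.2 hY, rfl⟩

theorem le_card_filter_le_kMinMax (f : V → V → ℝ) (X : Finset V) {k : ℕ} (x : V)
    (hk : k ≤ #(X.erase x)) : k ≤ #{z ∈ X.erase x | f x z ≤ kMinMax f X k x} := by
  obtain ⟨Y, hYE, hYk⟩ := exists_subset_card_eq hk
  obtain ⟨Y', hY'E, hY'k, hY'⟩ :=
    Set.Nonempty.csInf_mem (by exact ⟨_, Y, hYE, hYk, rfl⟩) (finite_kMinMax_values f X k x)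
  calc k = #Y' := hY'k.symm
    _ ≤ _ := card_le_card fun z hz => mem_filter.2 ⟨hY'E hz, by
      rw [kMinMax, hY', setOf_exists_mem_eq_image]
      exact le_csSup (Y'.image (f x)).bddAbove (mem_image_of_mem _ hz)⟩

theorem card_filter_lt_kMinMax_lt (f : V → V → ℝ) (X : Finset V) {k : ℕ} (hk : 0 < k) (x : V) :
    #{z ∈ X.erase x | f x z < kMinMax f X k x} < k := by
  by_contra! h
  obtain ⟨Y, hYsub, hYk⟩ := exists_subset_card_eq h
  have hle : kMinMax f X k x ≤ sSup {s | ∃ y ∈ Y, s = f x y} :=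
    csInf_le (finite_kMinMax_values f X k x).bddBelow
      ⟨Y, hYsub.trans (filter_subset _ _), hYk, rfl⟩
  rw [setOf_exists_mem_eq_image] at hle
  obtain ⟨z, hz, hzmax⟩ := mem_image.1 ((card_pos.1 (hYk ▸ hk)).image (f x)).csSup_mem
  exact (mem_filter.1 (hYsub hz)).2.not_ge (hzmax ▸ hle)

theorem nearK_iff_of_distortion {f g : V → V → ℝ} {X : Finset V} {k : ℕ} {ε : ℝ} {x : V}
    (hε0 : 0 < ε) (hε1 : ε < 1) (hf : ∀ z ∈ X.erase x, 0 < f x z)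
    (hfg : ∀ z ∈ X.erase x, (1 - ε) * f x z < g x z ∧ g x z < (1 + ε) * f x z)
    (hgap : kMinMax f X k x ≤ (1 - ε) / (1 + ε) * kMinMax f X (k + 1) x) (y : V) :
    NearK g X k x y ↔ NearK f X k x y := by
  refine and_congr_right fun hy => ?_
  rcases lt_or_ge #(X.erase x) k with hsmall | hk
  · have hlt : ∀ (p : V → Prop) [DecidablePred p], ¬ p y → #{z ∈ X.erase x | p z} < k :=
      fun p _ hpy => (card_lt_card (filter_ssubset.2 ⟨y, hy, hpy⟩)).trans hsmall
    exact iff_of_true (hlt _ (lt_irrefl _)) (hlt _ (lt_irrefl _))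
  have hgap' : (1 + ε) * kMinMax f X k x ≤ (1 - ε) * kMinMax f X (k + 1) x := by
    rwa [← le_div_iff₀' (by linarith), mul_div_right_comm]
  have hd := le_card_filter_le_kMinMax f X x hk
  have hd' := Nat.lt_succ_iff.1 (card_filter_lt_kMinMax_lt f X k.succ_pos x)
  -- `f` is itself a distortion of `f`, so the same threshold describes both relations.
  have hff : ∀ z ∈ X.erase x, (1 - ε) * f x z < f x z ∧ f x z < (1 + ε) * f x z :=
    fun z hz => ⟨by nlinarith [hf z hz], by nlinarith [hf z hz]⟩
  rw [card_filter_lt_lt_iff_of_distortion hε0.le hε1 hfg hd hd' hgap' hy,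
    card_filter_lt_lt_iff_of_distortion hε0.le hε1 hff hd hd' hgap' hy]

theorem nearK_image_iff (g : W → W → ℝ) {X : Finset V} (k : ℕ) {ψ : V → W}
    (hψ : Set.InjOn ψ X) {x y : V} (hx : x ∈ X) (hy : y ∈ X) :
    NearK g (X.image ψ) k (ψ x) (ψ y) ↔ NearK (fun a b => g (ψ a) (ψ b)) X k x y := by
  have herase : (X.image ψ).erase (ψ x) = (X.erase x).image ψ := by
    ext w
    simp only [mem_erase, mem_image]
    constructor
    · rintro ⟨hw, z, hz, rfl⟩
      exact ⟨z, ⟨fun h => hw (h ▸ rfl), hz⟩, rfl⟩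
    · rintro ⟨z, ⟨hzx, hz⟩, rfl⟩
      exact ⟨fun h => hzx (hψ hz hx h), z, hz, rfl⟩
  have hsub : ((X.erase x : Finset V) : Set V) ⊆ X := coe_subset.2 (erase_subset x X)
  unfold NearK
  rw [herase, filter_image,
    card_image_of_injOn (hψ.mono ((coe_subset.2 (filter_subset _ _)).trans hsub)),
    ← mem_coe, coe_image, hψ.mem_image_iff hsub hy, mem_coe]

theorem nearK_sq_iff {f : V → V → ℝ} (hf : ∀ a b, 0 ≤ f a b) (X : Finset V) (k : ℕ) (x y : V) :
    NearK (fun a b => f a b ^ 2) X k x y ↔ NearK f X k x y := by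
  simp only [NearK, pow_lt_pow_iff_left₀ (hf _ _) (hf _ _) two_ne_zero]

theorem isKNNIso_sq_iff {f : V → V → ℝ} {g : W → W → ℝ} (hf : ∀ a b, 0 ≤ f a b)
    (hg : ∀ a b, 0 ≤ g a b) (X : Finset V) (k : ℕ) (ψ : V → W) :
    IsKNNIso (fun a b => f a b ^ 2) (fun a b => g a b ^ 2) X k ψ ↔ IsKNNIso f g X k ψ := by
  simp only [IsKNNIso, KNNAdj, nearK_sq_iff hf, nearK_sq_iff hg]

theorem isKNNIso_of_nearK_iff {f : V → V → ℝ} {g : W → W → ℝ} {X : Finset V} {k : ℕ}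
    {ψ : V → W} (hψ : Set.InjOn ψ X)
    (h : ∀ x ∈ X, ∀ y, NearK (fun a b => g (ψ a) (ψ b)) X k x y ↔ NearK f X k x y) :
    IsKNNIso f g X k ψ := by
  refine ⟨hψ, fun x hx y hy => ?_⟩
  simp only [KNNAdj, nearK_image_iff g k hψ hx hy, nearK_image_iff g k hψ hy hx, h x hx, h y hy,
    hψ.ne_iff hx hy, mem_image_of_mem ψ hx, mem_image_of_mem ψ hy, hx, hy, true_and]

theorem isKNNIso_of_distortion {f : V → V → ℝ} {g : W → W → ℝ} {X : Finset V} {k : ℕ}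
    {ψ : V → W} {ε : ℝ} (hε0 : 0 < ε) (hε1 : ε < 1)
    (hf : ∀ x ∈ X, ∀ y ∈ X, x ≠ y → 0 < f x y) (hg : ∀ w, g w w = 0)
    (hfg : ∀ x ∈ X, ∀ y ∈ X, x ≠ y →
      (1 - ε) * f x y < g (ψ x) (ψ y) ∧ g (ψ x) (ψ y) < (1 + ε) * f x y)
    (hgap : ∀ x ∈ X, kMinMax f X k x ≤ (1 - ε) / (1 + ε) * kMinMax f X (k + 1) x) :
    IsKNNIso f g X k ψ := by
  have hψ : Set.InjOn ψ X := fun x hx y hy hxy => by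
    by_contra hne
    have := (hfg x hx y hy hne).1
    rw [hxy, hg] at this
    nlinarith [hf x hx y hy hne]
  refine isKNNIso_of_nearK_iff hψ fun x hx y =>
    nearK_iff_of_distortion hε0 hε1 ?_ ?_ (hgap x hx) y
  · exact fun z hz => hf x hx z (mem_of_mem_erase hz) (ne_of_mem_erase hz).symm
  · exact fun z hz => hfg x hx z (mem_of_mem_erase hz) (ne_of_mem_erase hz).symm

end NearestNeighbors

theorem isKNNIso_distE_of_sq_distortion {m n k : ℕ} {X : Finset (Fin n → ℝ)} {ε : ℝ}
    (hε0 : 0 < ε) (hε1 : ε < 1)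
    (hgap : ∀ x ∈ X, kMinMax (fun a b => distE a b ^ 2) X k x ≤
      (1 - ε) / (1 + ε) * kMinMax (fun a b => distE a b ^ 2) X (k + 1) x)
    {ψ : (Fin n → ℝ) → Fin m → ℝ}
    (hψ : ∀ x ∈ X, ∀ y ∈ X, x ≠ y → (1 - ε) * distE x y ^ 2 < distE (ψ x) (ψ y) ^ 2 ∧
      distE (ψ x) (ψ y) ^ 2 < (1 + ε) * distE x y ^ 2) :
    IsKNNIso distE distE X k ψ :=
  (isKNNIso_sq_iff distE_nonneg distE_nonneg X k ψ).1 <|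
    isKNNIso_of_distortion hε0 hε1 (fun x _ y _ hxy => pow_pos (distE_pos hxy) 2)
      (fun w => by simp [distE_self]) hψ hgap

theorem lintegral_exp_mul_sq_gaussianReal (w : ℝ≥0) {t : ℝ} (ht : 2 * t * w < 1) :
    ∫⁻ x, ENNReal.ofReal (exp (t * x ^ 2)) ∂gaussianReal 0 w
      = ENNReal.ofReal (sqrt (1 - 2 * t * w))⁻¹ := by
  rcases eq_or_ne w 0 with rfl | hw
  · simp [gaussianReal_zero_var]
  have hb : 0 < (1 - 2 * t * w) / (2 * w) := div_pos (by linarith) (by positivity)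
  rw [gaussianReal_of_var_ne_zero 0 hw,
    lintegral_withDensity_eq_lintegral_mul _ (measurable_gaussianPDF 0 w) (by fun_prop)]
  have hpdf : ∀ x : ℝ, (gaussianPDF 0 w * fun x => ENNReal.ofReal (exp (t * x ^ 2))) x
      = ENNReal.ofReal ((sqrt (2 * π * w))⁻¹ * exp (-((1 - 2 * t * w) / (2 * w)) * x ^ 2)) := by
    intro x
    simp only [Pi.mul_apply, gaussianPDF, gaussianPDFReal]
    rw [← ENNReal.ofReal_mul (by positivity), mul_assoc, ← exp_add]
    congr 3
    field_simp
    ring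
  simp only [hpdf]
  rw [← ofReal_integral_eq_lintegral_ofReal ((integrable_exp_neg_mul_sq hb).const_mul _)
    (Filter.Eventually.of_forall fun x => by positivity), integral_const_mul, integral_gaussian,
    ← sqrt_inv, ← sqrt_inv, ← sqrt_mul (by positivity)]
  congr 2
  field_simp

theorem map_pi_gaussianReal_sum_mul {ι : Type*} [Fintype ι] (v : ℝ≥0) (u : ι → ℝ) :
    (Measure.pi fun _ : ι => gaussianReal 0 v).map (fun a => ∑ j, a j * u j)
      = gaussianReal 0 (v * (∑ j, u j ^ 2).toNNReal) := by
  have hL : Measurable fun a : ι → ℝ => ∑ j, a j * u j := by fun_prop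
  refine Measure.ext_of_charFun (funext fun t => ?_)
  rw [charFun_apply_real, integral_map hL.aemeasurable (by fun_prop), charFun_gaussianReal]
  have hprod : ∀ a : ι → ℝ, Complex.exp (t * ↑(∑ j, a j * u j) * Complex.I)
      = ∏ j, Complex.exp ((t * u j : ℝ) * a j * Complex.I) := by
    intro a
    rw [← Complex.exp_sum]
    push_cast
    rw [mul_sum, sum_mul]
    exact congrArg _ (sum_congr rfl fun j _ => by ring)
  simp_rw [hprod]
  rw [integral_fintype_prod_eq_prod
    (f := fun j (x : ℝ) => Complex.exp ((t * u j : ℝ) * x * Complex.I))]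
  simp_rw [← charFun_apply_real, charFun_gaussianReal, ← Complex.exp_sum]
  congr 1
  rw [NNReal.coe_mul, Real.coe_toNNReal _ (by positivity)]
  push_cast
  simp only [mul_zero, zero_mul, zero_sub, sum_neg_distrib, mul_sum, sum_mul, sum_div]
  exact congrArg _ (sum_congr rfl fun j _ => by ring)

instance isProbabilityMeasure_gaussMat (m n : ℕ) (v : ℝ≥0) :
    IsProbabilityMeasure (gaussMat m n v) := by
  unfold gaussMat
  infer_instance

theorem lintegral_exp_mul_euclNorm_sq_gaussMat (m n : ℕ) (v : ℝ≥0) (u : Fin n → ℝ) {t : ℝ}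
    (ht : 2 * t * v * euclNorm u ^ 2 < 1) :
    ∫⁻ A, ENNReal.ofReal (exp (t * euclNorm (matVec A u) ^ 2)) ∂gaussMat m n v
      = ENNReal.ofReal (sqrt (1 - 2 * t * v * euclNorm u ^ 2))⁻¹ ^ m := by
  set ν := Measure.pi fun _ : Fin n => gaussianReal 0 v
  set g : (Fin n → ℝ) → ℝ≥0∞ := fun a => ENNReal.ofReal (exp (t * (∑ j, a j * u j) ^ 2))
  have hg : Measurable g := by fun_prop
  have hrow : ∫⁻ a, g a ∂ν = ENNReal.ofReal (sqrt (1 - 2 * t * v * euclNorm u ^ 2))⁻¹ := by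
    rw [← lintegral_map (f := fun x : ℝ => ENNReal.ofReal (exp (t * x ^ 2))) (by fun_prop)
      (by fun_prop), map_pi_gaussianReal_sum_mul, lintegral_exp_mul_sq_gaussianReal]
    all_goals rw [NNReal.coe_mul, Real.coe_toNNReal _ (by positivity), ← euclNorm_sq]
    · ring_nf
    · linarith
  have hsplit : ∀ A : Fin m → Fin n → ℝ,
      ENNReal.ofReal (exp (t * euclNorm (matVec A u) ^ 2)) = ∏ i, g (A i) := by
    intro A
    rw [euclNorm_sq, mul_sum, exp_sum, ENNReal.ofReal_prod_of_nonneg fun i _ => by positivity]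
    simp only [g, matVec]
  have hind : iIndepFun (fun i (A : Fin m → Fin n → ℝ) => g (A i)) (Measure.pi fun _ => ν) :=
    iIndepFun_pi fun _ => hg.aemeasurable
  have heval : ∀ i : Fin m, ∫⁻ A, g (A i) ∂(Measure.pi fun _ => ν) = ∫⁻ a, g a ∂ν :=
    fun i => (measurePreserving_eval _ i).lintegral_comp hg
  simp_rw [hsplit]
  rw [gaussMat, lintegral_prod_eq_prod_lintegral_of_indepFun univ _ hind
    fun i => hg.comp (measurable_pi_apply i)]
  simp only [heval, hrow, prod_const, card_univ, Fintype.card_fin]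

theorem gaussMat_chernoff_le (m n : ℕ) (v : ℝ≥0) (u : Fin n → ℝ) {t : ℝ} (r : ℝ)
    (ht : 2 * t * v * euclNorm u ^ 2 < 1) :
    gaussMat m n v {A | r ≤ t * euclNorm (matVec A u) ^ 2}
      ≤ ENNReal.ofReal ((sqrt (1 - 2 * t * v * euclNorm u ^ 2))⁻¹ ^ m / exp r) := by
  have hexp : {A : Fin m → Fin n → ℝ | r ≤ t * euclNorm (matVec A u) ^ 2}
      = {A | ENNReal.ofReal (exp r) ≤ ENNReal.ofReal (exp (t * euclNorm (matVec A u) ^ 2))} := by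
    ext A
    simp only [Set.mem_ofPred_eq, ENNReal.ofReal_le_ofReal_iff (exp_pos _).le, exp_le_exp]
  have hmeas : Measurable fun A : Fin m → Fin n → ℝ =>
      ENNReal.ofReal (exp (t * euclNorm (matVec A u) ^ 2)) := by
    unfold matVec euclNorm
    fun_prop
  rw [hexp, ENNReal.ofReal_div_of_pos (exp_pos r), ENNReal.ofReal_pow (by positivity),
    ← lintegral_exp_mul_euclNorm_sq_gaussMat m n v u ht]
  exact meas_ge_le_lintegral_div hmeas.aemeasurable (by positivity) ENNReal.ofReal_ne_top

theorem one_add_le_exp_cubic {ε : ℝ} (h0 : 0 ≤ ε) (h1 : ε ≤ 1) :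
    1 + ε ≤ exp (ε - ε ^ 2 / 2 + ε ^ 3 / 2) := by
  have hy : 0 ≤ ε - ε ^ 2 / 2 + ε ^ 3 / 2 := by nlinarith
  refine le_trans ?_ (quadratic_le_exp_of_nonneg hy)
  nlinarith [pow_nonneg h0 4, pow_nonneg h0 6, mul_nonneg (pow_nonneg h0 5) (sub_nonneg.2 h1)]

theorem one_sub_le_exp_cubic {ε : ℝ} (h0 : 0 ≤ ε) (h1 : ε < 1) :
    1 - ε ≤ exp (-ε - ε ^ 2 / 2 + ε ^ 3 / 2) := by
  have hlog : ε + ε ^ 2 / 2 ≤ -log (1 - ε) := by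
    have := sum_le_hasSum (range 2) (fun i _ => by positivity)
      (hasSum_pow_div_log_of_abs_lt_one (show |ε| < 1 by rwa [abs_of_nonneg h0]))
    norm_num [sum_range_succ] at this
    linarith
  rw [← exp_log (show 0 < 1 - ε by linarith), exp_le_exp]
  nlinarith [pow_nonneg h0 3]

theorem gaussMat_tail_le (m n : ℕ) {u : Fin n → ℝ} (hu : 0 < euclNorm u) {s c : ℝ}
    (hs : -1 < s) (hsc : 1 + s ≤ exp (s + c)) :
    gaussMat m n (m : ℝ≥0)⁻¹
        {A | s * ((1 + s) * euclNorm u ^ 2) ≤ s * euclNorm (matVec A u) ^ 2}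
      ≤ ENNReal.ofReal (exp (m * c / 2)) := by
  rcases m.eq_zero_or_pos with rfl | hm
  · simpa using prob_le_one
  set S := euclNorm u ^ 2
  have hS : 0 < S := by positivity
  have hs1 : 0 < 1 + s := by linarith
  -- The Chernoff parameter, chosen so that `1 - 2 t S / m = (1 + s)⁻¹`.
  set t := m * s / (2 * (1 + s) * S) with ht_def
  have hD : 1 - 2 * t * ((m : ℝ≥0)⁻¹ : ℝ≥0) * S = (1 + s)⁻¹ := by
    rw [ht_def]
    push_cast
    field_simp
    ring
  have ht : 2 * t * ((m : ℝ≥0)⁻¹ : ℝ≥0) * S < 1 := by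
    have : 0 < (1 + s)⁻¹ := inv_pos.2 hs1
    linarith
  have hevent : {A : Fin m → Fin n → ℝ | s * ((1 + s) * S) ≤ s * euclNorm (matVec A u) ^ 2}
      ⊆ {A | m * s / 2 ≤ t * euclNorm (matVec A u) ^ 2} := by
    intro A hA
    have hpos : (0 : ℝ) ≤ m / (2 * (1 + s) * S) := by positivity
    calc (m * s / 2 : ℝ) = m / (2 * (1 + s) * S) * (s * ((1 + s) * S)) := by field_simp
      _ ≤ m / (2 * (1 + s) * S) * (s * euclNorm (matVec A u) ^ 2) :=
        mul_le_mul_of_nonneg_left hA hpos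
      _ = t * euclNorm (matVec A u) ^ 2 := by ring
  refine (measure_mono hevent).trans ((gaussMat_chernoff_le m n _ u _ ht).trans ?_)
  rw [hD, sqrt_inv, inv_inv]
  refine ENNReal.ofReal_le_ofReal ((div_le_iff₀ (exp_pos _)).2 ?_)
  calc sqrt (1 + s) ^ m ≤ exp ((s + c) / 2) ^ m :=
        pow_le_pow_left₀ (sqrt_nonneg _) (exp_half (s + c) ▸ sqrt_le_sqrt hsc) m
    _ = exp (m * c / 2) * exp (m * s / 2) := by
        rw [← exp_nat_mul, ← exp_add]
        ring_nf

theorem gaussMat_upper_tail_le (m : ℕ) {n : ℕ} {x y : Fin n → ℝ} (hxy : x ≠ y) {ε : ℝ}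
    (hε0 : 0 ≤ ε) (hε1 : ε ≤ 1) :
    gaussMat m n (m : ℝ≥0)⁻¹
        {A | (1 + ε) * distE x y ^ 2 ≤ distE (matVec A x) (matVec A y) ^ 2}
      ≤ ENNReal.ofReal (exp (m / 4 * (ε ^ 3 - ε ^ 2))) := by
  have htail := gaussMat_tail_le m n (distE_pos hxy) (s := ε) (c := (ε ^ 3 - ε ^ 2) / 2)
    (by linarith) (by convert one_add_le_exp_cubic hε0 hε1 using 2; ring)
  refine (measure_mono fun A hA => ?_).trans (htail.trans_eq (by ring_nf))
  rw [Set.mem_ofPred_eq, distE_matVec] at hA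
  exact mul_le_mul_of_nonneg_left hA hε0

theorem gaussMat_lower_tail_le (m : ℕ) {n : ℕ} {x y : Fin n → ℝ} (hxy : x ≠ y) {ε : ℝ}
    (hε0 : 0 ≤ ε) (hε1 : ε < 1) :
    gaussMat m n (m : ℝ≥0)⁻¹
        {A | distE (matVec A x) (matVec A y) ^ 2 ≤ (1 - ε) * distE x y ^ 2}
      ≤ ENNReal.ofReal (exp (m / 4 * (ε ^ 3 - ε ^ 2))) := by
  have htail := gaussMat_tail_le m n (distE_pos hxy) (s := -ε) (c := (ε ^ 3 - ε ^ 2) / 2)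
    (by linarith) (by convert one_sub_le_exp_cubic hε0 hε1 using 2 <;> ring)
  refine (measure_mono fun A hA => ?_).trans (htail.trans_eq (by ring_nf))
  rw [Set.mem_ofPred_eq, distE_matVec] at hA
  rw [Set.mem_ofPred_eq, ← sub_eq_add_neg]
  exact mul_le_mul_of_nonpos_left hA (neg_nonpos.2 hε0)

theorem measure_iUnion_offDiag_union_le {Ω α : Type*} [MeasurableSpace Ω] [DecidableEq α]
    (μ : Measure Ω) (X : Finset α) {L U : α → α → Set Ω} (hL : ∀ x y, L x y = L y x)
    (hU : ∀ x y, U x y = U y x) {e : ℝ≥0∞}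
    (hLe : ∀ x ∈ X, ∀ y ∈ X, x ≠ y → μ (L x y) ≤ e)
    (hUe : ∀ x ∈ X, ∀ y ∈ X, x ≠ y → μ (U x y) ≤ e) :
    μ (⋃ x ∈ X, ⋃ y ∈ X, ⋃ (_ : x ≠ y), L x y ∪ U x y) ≤ #X.offDiag * e := by
  classical
  -- Of the two orderings of a pair, the one increasing for a well-order pays for `L`,
  -- the other one for `U`.
  let B : α × α → Set Ω := fun p => if WellOrderingRel p.1 p.2 then L p.1 p.2 else U p.1 p.2
  have hB : ∀ x ∈ X, ∀ y ∈ X, WellOrderingRel x y →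
      L x y ∪ U x y ⊆ ⋃ p ∈ X.offDiag, B p := by
    intro x hx y hy hxy
    have hne : x ≠ y := ne_of_irrefl hxy
    refine Set.union_subset ?_ ?_
    · refine (Set.subset_biUnion_of_mem (u := B) (x := (x, y))
        (mem_offDiag.2 ⟨hx, hy, hne⟩)).trans' ?_
      simp [B, hxy]
    · refine (Set.subset_biUnion_of_mem (u := B) (x := (y, x))
        (mem_offDiag.2 ⟨hy, hx, hne.symm⟩)).trans' ?_
      simp [B, asymm hxy, hU x y]
  have hcover : (⋃ x ∈ X, ⋃ y ∈ X, ⋃ (_ : x ≠ y), L x y ∪ U x y) ⊆ ⋃ p ∈ X.offDiag, B p := by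
    simp only [Set.iUnion_subset_iff]
    intro x hx y hy hxy
    rcases trichotomous_of WellOrderingRel x y with h | h | h
    · exact hB x hx y hy h
    · exact absurd h hxy
    · rw [hL, hU]
      exact hB y hy x hx h
  calc μ _ ≤ ∑ p ∈ X.offDiag, μ (B p) :=
        (measure_mono hcover).trans (measure_biUnion_finset_le _ _)
    _ ≤ #X.offDiag * e := by
      rw [← nsmul_eq_mul]
      refine sum_le_card_nsmul _ _ _ fun p hp => ?_
      obtain ⟨hx, hy, hne⟩ := mem_offDiag.1 hp
      by_cases h : WellOrderingRel p.1 p.2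
      · simpa [B, h] using hLe _ hx _ hy hne
      · simpa [B, h] using hUe _ hx _ hy hne

theorem ofReal_one_sub_le_of_measure_compl_le {Ω : Type*} [MeasurableSpace Ω] {μ : Measure Ω}
    [IsProbabilityMeasure μ] {s : Set Ω} {c : ℝ} (hc : 0 ≤ c) (h : μ sᶜ ≤ ENNReal.ofReal c) :
    ENNReal.ofReal (1 - c) ≤ μ s :=
  calc ENNReal.ofReal (1 - c) = 1 - ENNReal.ofReal c := by
        rw [ENNReal.ofReal_sub _ hc, ENNReal.ofReal_one]
    _ ≤ 1 - μ sᶜ := tsub_le_tsub_left h 1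
    _ ≤ μ s := tsub_le_iff_right.2 <| by
        rw [← measure_univ (μ := μ), ← Set.union_compl_self s]
        exact measure_union_le _ _

/-- with high probability, a random Gaussian matrix induces a graph isomorphism
of `k`-nearest neighbor graphs. -/
theorem stmt_2 (n m k : ℕ) (X : Finset (Fin n → ℝ)) (ε : ℝ) (hε0 : 0 < ε) (hε1 : ε < 1)
    (hgap : ∀ x ∈ X,
      kMinMax (fun a b => distE a b ^ 2) X k x ≤
        (1 - ε) / (1 + ε) * kMinMax (fun a b => distE a b ^ 2) X (k + 1) x) :
    ENNReal.ofReal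
        (1 - (X.card : ℝ) * ((X.card : ℝ) - 1) * Real.exp ((m : ℝ) / 4 * (ε ^ 3 - ε ^ 2))) ≤
      gaussMat m n (m : NNReal)⁻¹
        {A | IsKNNIso distE distE X k (matVec A)} := by
  have hcard : (X.card : ℝ) * ((X.card : ℝ) - 1) = #X.offDiag := by
    rw [offDiag_card, Nat.cast_sub (Nat.le_mul_self _)]
    push_cast
    ring
  rw [hcard]
  refine ofReal_one_sub_le_of_measure_compl_le (by positivity) ?_
  rw [ENNReal.ofReal_mul (by positivity), ENNReal.ofReal_natCast]
  refine (measure_mono fun A hA => ?_).trans (measure_iUnion_offDiag_union_le _ X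
    (L := fun x y => {A | distE (matVec A x) (matVec A y) ^ 2 ≤ (1 - ε) * distE x y ^ 2})
    (U := fun x y => {A | (1 + ε) * distE x y ^ 2 ≤ distE (matVec A x) (matVec A y) ^ 2})
    (fun x y => by simp only [distE_comm x y, distE_comm (matVec _ x)])
    (fun x y => by simp only [distE_comm x y, distE_comm (matVec _ x)])
    (fun x _ y _ hxy => gaussMat_lower_tail_le m hxy hε0.le hε1)
    (fun x _ y _ hxy => gaussMat_upper_tail_le m hxy hε0.le hε1.le))
  by_contra hbad
  simp only [Set.mem_iUnion, Set.mem_union, Set.mem_ofPred_eq, not_exists, not_or, not_le] at hbad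
  exact hA (isKNNIso_distE_of_sq_distortion hε0 hε1 hgap hbad)
end

section
/- Let X ⊂ ℝⁿ be a finite set, let r > 0, and for x ∈ X let N(x) denote its one-hop neighborhood in the r-neighborhood graph G_r(X). Let 0 < ε < 1 satisfy, for every x ∈ X, ε < min{ (r − max_{y∈N(x)} ‖x−y‖) / max_{y∈N(x)} ‖x−y‖, (min_{y∉N(x)} ‖x−y‖ − r) / min_{y∉N(x)} ‖x−y‖ }. Let A ∈ ℝ^{m×n} be any (deterministic) matrix satisfying (1−ε)‖x−y‖ ≤ ‖Ax − Ay‖ ≤ (1+ε)‖x−y‖ for all x, y ∈ X. Then the map ψ: x ↦ Ax is a graph isomorphism between G_r(X) and G_r(AX), where AX = {Ax : x ∈ X}. -/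
/-! A map with distortion `ε` sends a neighbor distance `d ≤ M` (the largest neighbor distance)
to at most `(1 + ε) M < r`, and a non-neighbor distance `d ≥ N` (the smallest one) to at least
`(1 - ε) N > r`; both strict inequalities are the gap condition on `ε`. Since `ε < 1`, distinct
points stay distinct, so adjacency is preserved and reflected. -/

open MeasureTheory ProbabilityTheory

/-- Adjacency in the `r`-neighborhood graph `G_r(X)` (w.r.t. the distance `d`):
distinct points of `X` at distance `< r`. -/
def RAdj {V : Type*} (d : V → V → ℝ) (X : Finset V) (r : ℝ) (x y : V) : Prop :=
  x ≠ y ∧ x ∈ X ∧ y ∈ X ∧ d x y < r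

/-- `max_{y ∈ N(x)} g x y`, where `N(x)` is the one-hop neighborhood of `x` in `G_r(X)`. -/
noncomputable def maxNbrVal {V : Type*} (d : V → V → ℝ) (X : Finset V) (r : ℝ)
    (g : V → V → ℝ) (x : V) : ℝ :=
  sSup {s : ℝ | ∃ y, RAdj d X r x y ∧ s = g x y}

/-- `min_{y ∈ X, y ∉ N(x), y ≠ x} g x y`, where `N(x)` is the one-hop neighborhood of `x`
in `G_r(X)`. -/
noncomputable def minNonNbrVal {V : Type*} (d : V → V → ℝ) (X : Finset V) (r : ℝ)
    (g : V → V → ℝ) (x : V) : ℝ :=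
  sInf {s : ℝ | ∃ y ∈ X, y ≠ x ∧ ¬ RAdj d X r x y ∧ s = g x y}

/-- `ψ` is a graph isomorphism between `G_r(X)` and `G_r(ψ(X))`: it is a bijection of `X`
onto its image preserving and reflecting `r`-neighborhood adjacency. -/
def IsRIso {V W : Type*} [DecidableEq W] (dV : V → V → ℝ) (dW : W → W → ℝ)
    (X : Finset V) (r : ℝ) (ψ : V → W) : Prop :=
  Set.InjOn ψ X ∧
    ∀ x ∈ X, ∀ y ∈ X, (RAdj dV X r x y ↔ RAdj dW (X.image ψ) r (ψ x) (ψ y))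

section NeighborhoodGraph

variable {V : Type*} (d : V → V → ℝ) (X : Finset V) (r : ℝ)

lemma le_maxNbrVal (g : V → V → ℝ) {x y : V} (hxy : RAdj d X r x y) :
    g x y ≤ maxNbrVal d X r g x := by
  refine le_csSup (Set.Finite.bddAbove ?_) ⟨y, hxy, rfl⟩
  refine (X.finite_toSet.image (g x)).subset ?_
  rintro _ ⟨z, hz, rfl⟩
  exact ⟨z, hz.2.2.1, rfl⟩

lemma minNonNbrVal_le (g : V → V → ℝ) {x y : V} (hy : y ∈ X) (hyx : y ≠ x)
    (hxy : ¬ RAdj d X r x y) : minNonNbrVal d X r g x ≤ g x y := by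
  refine csInf_le (Set.Finite.bddBelow ?_) ⟨y, hy, hyx, hxy, rfl⟩
  refine (X.finite_toSet.image (g x)).subset ?_
  rintro _ ⟨z, hz, -, -, rfl⟩
  exact ⟨z, hz, rfl⟩

lemma le_of_not_rAdj {x y : V} (hx : x ∈ X) (hy : y ∈ X) (hxy : x ≠ y)
    (h : ¬ RAdj d X r x y) : r ≤ d x y :=
  le_of_not_gt fun hlt => h ⟨hxy, hx, hy, hlt⟩

lemma le_minNonNbrVal {x y : V} (hx : x ∈ X) (hy : y ∈ X) (hyx : y ≠ x)
    (hxy : ¬ RAdj d X r x y) : r ≤ minNonNbrVal d X r d x := by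
  refine le_csInf ⟨_, y, hy, hyx, hxy, rfl⟩ ?_
  rintro _ ⟨z, hz, hzx, hxz, rfl⟩
  exact le_of_not_rAdj d X r hx hz hzx.symm hxz

lemma rAdj_image_iff {W : Type*} [DecidableEq W] (dW : W → W → ℝ) (ψ : V → W) {x y : V}
    (hx : x ∈ X) (hy : y ∈ X) :
    RAdj dW (X.image ψ) r (ψ x) (ψ y) ↔ ψ x ≠ ψ y ∧ dW (ψ x) (ψ y) < r := by
  simp only [RAdj, Finset.mem_image_of_mem ψ hx, Finset.mem_image_of_mem ψ hy, true_and]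

end NeighborhoodGraph

lemma one_add_mul_lt_of_lt_div {ε a M r : ℝ} (ha : 0 ≤ a) (har : a < r) (haM : a ≤ M)
    (hM : 0 < M) (hε : ε < (r - M) / M) : (1 + ε) * a < r := by
  rw [lt_div_iff₀ hM] at hε
  rcases le_or_gt 0 (1 + ε) with hε' | hε'
  · nlinarith
  · nlinarith

lemma lt_one_sub_mul_of_lt_div {ε a N r : ℝ} (ha : 0 < a) (hNa : N ≤ a) (hrN : r ≤ N)
    (hε1 : ε < 1) (hε : ε < (N - r) / N) : r < (1 - ε) * a := by
  rcases le_or_gt N 0 with hN | hN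
  · nlinarith
  · rw [lt_div_iff₀ hN] at hε
    nlinarith

theorem isRIso_of_distortion {V W : Type*} [DecidableEq W] (dV : V → V → ℝ)
    (dW : W → W → ℝ) (X : Finset V) (r ε : ℝ) (ψ : V → W)
    (hdV : ∀ x ∈ X, ∀ y ∈ X, x ≠ y → 0 < dV x y) (hdW : ∀ w, dW w w = 0) (hε1 : ε < 1)
    (hgap : ∀ x ∈ X,
      ε < min ((r - maxNbrVal dV X r dV x) / maxNbrVal dV X r dV x)
        ((minNonNbrVal dV X r dV x - r) / minNonNbrVal dV X r dV x))
    (hψ : ∀ x ∈ X, ∀ y ∈ X,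
      (1 - ε) * dV x y ≤ dW (ψ x) (ψ y) ∧ dW (ψ x) (ψ y) ≤ (1 + ε) * dV x y) :
    IsRIso dV dW X r ψ := by
  have hinj : Set.InjOn ψ X := by
    intro x hx y hy hxy
    by_contra hne
    have hlow := (hψ x hx y hy).1
    rw [hxy, hdW] at hlow
    nlinarith [hdV x hx y hy hne]
  refine ⟨hinj, fun x hx y hy => ?_⟩
  rw [rAdj_image_iff X r dW ψ hx hy, hinj.ne_iff hx hy]
  by_cases hxy : x = y
  · simp [RAdj, hxy]
  have hdxy := hdV x hx y hy hxy
  by_cases hadj : RAdj dV X r x y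
  · have hM := le_maxNbrVal dV X r dV hadj
    have hnear := one_add_mul_lt_of_lt_div hdxy.le hadj.2.2.2 hM (hdxy.trans_le hM)
      ((hgap x hx).trans_le (min_le_left _ _))
    exact iff_of_true hadj ⟨hxy, (hψ x hx y hy).2.trans_lt hnear⟩
  · have hfar := lt_one_sub_mul_of_lt_div hdxy
      (minNonNbrVal_le dV X r dV hy (Ne.symm hxy) hadj)
      (le_minNonNbrVal dV X r hx hy (Ne.symm hxy) hadj) hε1
      ((hgap x hx).trans_le (min_le_right _ _))
    exact iff_of_false hadj fun h => (hfar.trans_le (hψ x hx y hy).1).not_gt h.2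

lemma distE_eq_dist {k : ℕ} (a b : Fin k → ℝ) :
    distE a b = dist (WithLp.toLp 2 a : EuclideanSpace ℝ (Fin k)) (WithLp.toLp 2 b) := by
  simp [distE, euclNorm, EuclideanSpace.dist_eq, Real.dist_eq, sq_abs]

theorem stmt_10_general (n m : ℕ) (X : Finset (Fin n → ℝ)) (r : ℝ)
    (ε : ℝ) (hε1 : ε < 1)
    (hgap : ∀ x ∈ X,
      ε < min
        ((r - maxNbrVal distE X r distE x) / maxNbrVal distE X r distE x)
        ((minNonNbrVal distE X r distE x - r) / minNonNbrVal distE X r distE x))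
    (A : Fin m → Fin n → ℝ)
    (hA : ∀ x ∈ X, ∀ y ∈ X,
      (1 - ε) * distE x y ≤ distE (matVec A x) (matVec A y) ∧
        distE (matVec A x) (matVec A y) ≤ (1 + ε) * distE x y) :
    IsRIso distE distE X r (matVec A) := by
  refine isRIso_of_distortion distE distE X r ε (matVec A) (fun x _ y _ hxy => ?_) (fun w => ?_)
    hε1 hgap hA
  · rw [distE_eq_dist]
    exact dist_pos.mpr ((WithLp.toLp_injective 2).ne hxy)
  · rw [distE_eq_dist, dist_self]

/-- a deterministic linear map with (unsquared) distance distortion bounds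
induces a graph isomorphism of `r`-neighborhood graphs. -/
theorem stmt_10 (n m : ℕ) (X : Finset (Fin n → ℝ)) (r : ℝ) (hr : 0 < r)
    (ε : ℝ) (hε0 : 0 < ε) (hε1 : ε < 1)
    (hgap : ∀ x ∈ X,
      ε < min
        ((r - maxNbrVal distE X r distE x) / maxNbrVal distE X r distE x)
        ((minNonNbrVal distE X r distE x - r) / minNonNbrVal distE X r distE x))
    (A : Fin m → Fin n → ℝ)
    (hA : ∀ x ∈ X, ∀ y ∈ X,
      (1 - ε) * distE x y ≤ distE (matVec A x) (matVec A y) ∧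
        distE (matVec A x) (matVec A y) ≤ (1 + ε) * distE x y) :
    IsRIso distE distE X r (matVec A) :=
  stmt_10_general n m X r ε hε1 hgap A hA
end

section
/- Let x, y, z ∈ ℝⁿ be such that z ∉ span{x, y} and ‖x − y‖ ≥ ‖x − z‖. Then for every m ≥ n there exist a matrix A ∈ ℝ^{m×n} with AᵀA = Iₙ (a linear isometry) and a bias vector b ∈ ℝ^m such that ‖σ(Ax + b) − σ(Ay + b)‖ < ‖σ(Ax + b) − σ(Az + b)‖, where σ denotes the ReLU activation applied componentwise. -/
/-- The componentwise ReLU activation. -/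
def reluVec {k : ℕ} (v : Fin k → ℝ) : Fin k → ℝ := fun i => max 0 (v i)

/-!
Since `z ∉ span{x, y}`, there is a unit vector `u` orthogonal to `x` and `y` with `⟪u, z⟫ > 0`.
Completing `u` to an orthonormal basis of `ℝⁿ` and padding with zero rows gives an isometry `A`
with `u` as a row `i₀`. With bias `0` at `i₀` and very negative elsewhere, ReLU kills every other
coordinate, so `σ(Ax + b) = σ(Ay + b) = 0` while `σ(Az + b) = ⟪u, z⟫ • e_{i₀} ≠ 0`.
-/

open scoped RealInnerProductSpace

theorem Submodule.exists_norm_eq_one_mem_orthogonal_inner_pos {E : Type*}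
    [NormedAddCommGroup E] [InnerProductSpace ℝ E] (K : Submodule ℝ E) [K.HasOrthogonalProjection]
    {z : E} (hz : z ∉ K) : ∃ u ∈ Kᗮ, ‖u‖ = 1 ∧ 0 < ⟪u, z⟫ := by
  set w := z - K.starProjection z
  have hwK : w ∈ Kᗮ := K.sub_starProjection_mem_orthogonal z
  have hw : w ≠ 0 := fun h => hz (K.starProjection_eq_self_iff.mp (sub_eq_zero.mp h).symm)
  have hwz : ⟪w, z⟫ = ‖w‖ ^ 2 := by
    have : ⟪w, K.starProjection z⟫ = 0 :=
      K.inner_left_of_mem_orthogonal (K.starProjection_apply_mem z) hwK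
    rw [← real_inner_self_eq_norm_sq, inner_sub_right w, this, sub_zero]
  refine ⟨‖w‖⁻¹ • w, K.orthogonal.smul_mem _ hwK, norm_smul_inv_norm hw, ?_⟩
  rw [real_inner_smul_left, hwz]
  have := norm_pos_iff.mpr hw
  positivity

def HasOrthonormalColumns {m n : ℕ} (A : Fin m → Fin n → ℝ) : Prop :=
  ∀ j j' : Fin n, ∑ i, A i j * A i j' = if j = j' then 1 else 0

theorem OrthonormalBasis.hasOrthonormalColumns {n : ℕ}
    (B : OrthonormalBasis (Fin n) ℝ (EuclideanSpace ℝ (Fin n))) :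
    HasOrthonormalColumns fun i j => B i j := by
  intro j j'
  have hB := (EuclideanSpace.basisFun (Fin n) ℝ).toMatrix_orthonormalBasis_mem_unitary B
  have := congr_fun₂ (Matrix.mem_unitaryGroup_iff.mp hB) j j'
  simpa [Matrix.mul_apply, Matrix.one_apply, Module.Basis.toMatrix_apply] using this

theorem HasOrthonormalColumns.exists_extend_rows {k m n : ℕ} {A : Fin k → Fin n → ℝ}
    (hA : HasOrthonormalColumns A) (hkm : k ≤ m) :
    ∃ A' : Fin m → Fin n → ℝ, HasOrthonormalColumns A' ∧ ∀ i, A' (Fin.castLE hkm i) = A i := by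
  obtain ⟨l, rfl⟩ := Nat.exists_eq_add_of_le hkm
  refine ⟨Fin.append A 0, fun j j' => ?_, fun i => Fin.append_left A 0 i⟩
  simpa [Fin.sum_univ_add] using hA j j'

theorem exists_hasOrthonormalColumns_row_eq {m n : ℕ} (hnm : n ≤ m)
    {u : EuclideanSpace ℝ (Fin n)} (hu : ‖u‖ = 1) :
    ∃ A : Fin m → Fin n → ℝ, HasOrthonormalColumns A ∧ ∃ i₀, ∀ j, A i₀ j = u j := by
  obtain ⟨i₀⟩ : Nonempty (Fin n) := by
    by_contra h
    have : u = 0 := by ext i; exact (not_nonempty_iff.mp h).elim i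
    simp [this] at hu
  have hu' : Orthonormal ℝ (({i₀} : Set (Fin n)).domRestrict fun _ => u) :=
    ⟨fun _ => hu, fun i j hij => (hij (Subsingleton.elim i j)).elim⟩
  obtain ⟨B, hB⟩ := hu'.exists_orthonormalBasis_extension_of_card_eq (by simp)
  obtain ⟨A, hA, hAB⟩ := B.hasOrthonormalColumns.exists_extend_rows hnm
  exact ⟨A, hA, Fin.castLE hnm i₀, fun j => by rw [hAB, hB i₀ rfl]⟩

theorem matVec_apply_eq_inner {m n : ℕ} {A : Fin m → Fin n → ℝ} {i : Fin m}
    {u : EuclideanSpace ℝ (Fin n)} (h : ∀ j, A i j = u j) (x : Fin n → ℝ) :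
    matVec A x i = ⟪u, WithLp.toLp 2 x⟫ := by
  simp [matVec, PiLp.inner_apply, h, mul_comm]

theorem exists_bias_reluVec_add_eq_single {m : ℕ} (s : Finset (Fin m → ℝ)) (i₀ : Fin m) :
    ∃ b : Fin m → ℝ, ∀ v ∈ s, reluVec (v + b) = Pi.single i₀ (max 0 (v i₀)) := by
  refine ⟨fun i => if i = i₀ then 0 else -∑ w ∈ s, |w i|, fun v hv => funext fun i => ?_⟩
  by_cases hi : i = i₀
  · subst hi
    simp [reluVec]
  · have : v i ≤ ∑ w ∈ s, |w i| :=
      (le_abs_self _).trans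
        (Finset.single_le_sum (f := fun w => |w i|) (fun _ _ => abs_nonneg _) hv)
    simp [reluVec, hi, this]

theorem euclNorm_single {m : ℕ} (i : Fin m) (c : ℝ) : euclNorm (Pi.single i c) = |c| := by
  simp [euclNorm, Pi.single_apply, ite_pow, Real.sqrt_sq_eq_abs]

theorem euclNorm_zero {m : ℕ} : euclNorm (0 : Fin m → ℝ) = 0 := by
  simp [euclNorm]

theorem stmt_11_general (n : ℕ) (x y z : Fin n → ℝ)
    (hz : z ∉ Submodule.span ℝ ({x, y} : Set (Fin n → ℝ))) :
    ∀ m : ℕ, n ≤ m →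
      ∃ (A : Fin m → Fin n → ℝ) (b : Fin m → ℝ),
        (∀ j j' : Fin n, ∑ i, A i j * A i j' = if j = j' then (1 : ℝ) else 0) ∧
        euclNorm (reluVec (matVec A x + b) - reluVec (matVec A y + b)) <
          euclNorm (reluVec (matVec A x + b) - reluVec (matVec A z + b)) := by
  intro m hnm
  set K : Submodule ℝ (EuclideanSpace ℝ (Fin n)) :=
    (Submodule.span ℝ {x, y}).map (WithLp.linearEquiv 2 ℝ (Fin n → ℝ)).symm.toLinearMap
  have hxK : WithLp.toLp 2 x ∈ K := Submodule.mem_map_of_mem (Submodule.subset_span (by simp))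
  have hyK : WithLp.toLp 2 y ∈ K := Submodule.mem_map_of_mem (Submodule.subset_span (by simp))
  have hzK : WithLp.toLp 2 z ∉ K := by simpa [K, Submodule.mem_map_equiv] using hz
  obtain ⟨u, huK, hu, huz⟩ := K.exists_norm_eq_one_mem_orthogonal_inner_pos hzK
  obtain ⟨A, hA, i₀, hAu⟩ := exists_hasOrthonormalColumns_row_eq hnm hu
  obtain ⟨b, hb⟩ := exists_bias_reluVec_add_eq_single {matVec A x, matVec A y, matVec A z} i₀
  refine ⟨A, b, hA, ?_⟩
  rw [hb _ (by simp), hb _ (by simp), hb _ (by simp), matVec_apply_eq_inner hAu,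
    matVec_apply_eq_inner hAu, matVec_apply_eq_inner hAu, K.inner_left_of_mem_orthogonal hxK huK,
    K.inner_left_of_mem_orthogonal hyK huK, max_eq_right huz.le]
  simpa [← Pi.single_neg, euclNorm_single, euclNorm_zero] using huz.ne'

/-- composing a linear isometry with ReLU can change the ordering of pairwise
distances of three points. -/
theorem stmt_11 (n : ℕ) (x y z : Fin n → ℝ)
    (hz : z ∉ Submodule.span ℝ ({x, y} : Set (Fin n → ℝ)))
    (hxy : euclNorm (x - z) ≤ euclNorm (x - y)) :
    ∀ m : ℕ, n ≤ m →
      ∃ (A : Fin m → Fin n → ℝ) (b : Fin m → ℝ),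
        (∀ j j' : Fin n, ∑ i, A i j * A i j' = if j = j' then (1 : ℝ) else 0) ∧
        euclNorm (reluVec (matVec A x + b) - reluVec (matVec A y + b)) <
          euclNorm (reluVec (matVec A x + b) - reluVec (matVec A z + b)) :=
  stmt_11_general n x y z hz
end
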